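/- Let F : ℝ^d → ℝ be differentiable and β-smooth, μ-strongly convex with minimizer w*, and let η satisfy 0 < η ≤ 1/(2β). For a gradient step w⁺ = w - η·g where E[g] = ∇F(w) and E‖g - ∇F(w)‖² ≤ ς², we have E[F(w⁺)] - F(w*) ≤ (1 + 4μβη² - 2μη)·(F(w) - F(w*)) + 2βη²·ς². -/

import Mathlib

/-!
Smoothness gives the quadratic upper bound `F v ≤ F w + ⟪∇F w, v - w⟫ + β/2 ‖v - w‖²`; taking
expectations at `v = w - η g` and splitting `E‖g‖² = E‖g - ∇F w‖² + ‖∇F w‖²` (unbiasedness)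
yields `E F(w⁺) ≤ F w - η (1 - βη/2) ‖∇F w‖² + βη²/2 · ς²`. Strong convexity, minimised over the
second point, gives the Polyak–Łojasiewicz inequality `‖∇F w‖² ≥ 2μ (F w - F w*)`, which turns
the gradient term into a contraction of the optimality gap.
-/

open MeasureTheory AffineMap
open scoped RealInnerProductSpace

section

variable {Ω : Type*} [MeasurableSpace Ω] {P : Measure Ω}

theorem integrable_norm_sq_of_integrable_norm_sub_sq {E : Type*} [NormedAddCommGroup E]
    [IsFiniteMeasure P] {g : Ω → E} (m : E)
    (hg : AEStronglyMeasurable g P) (hgm : Integrable (fun ω => ‖g ω - m‖ ^ 2) P) :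
    Integrable (fun ω => ‖g ω‖ ^ 2) P := by
  have hL2 := ((memLp_two_iff_integrable_sq_norm (hg.sub aestronglyMeasurable_const)).2 hgm).add
    (memLp_const m)
  simp only [sub_add_cancel] at hL2
  exact (memLp_two_iff_integrable_sq_norm hg).1 hL2

variable {E : Type*} [NormedAddCommGroup E] [InnerProductSpace ℝ E] [CompleteSpace E]

theorem HasGradientAt.hasDerivAt_comp_lineMap {f : E → ℝ} {f' x y : E} {t : ℝ}
    (hf : HasGradientAt f f' (lineMap x y t)) :
    HasDerivAt (fun s => f (lineMap x y s)) ⟪f', y - x⟫ t :=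
  hf.hasFDerivAt.comp_hasDerivAt t hasDerivAt_lineMap

theorem le_add_inner_gradient_add_sq_of_lipschitz {f : E → ℝ} {L : ℝ}
    (hf : Differentiable ℝ f)
    (hL : ∀ x y, ‖gradient f x - gradient f y‖ ≤ L * ‖x - y‖) (x y : E) :
    f y ≤ f x + ⟪gradient f x, y - x⟫ + L / 2 * ‖y - x‖ ^ 2 := by
  set v := y - x
  set χ : ℝ → ℝ := fun t => f (lineMap x y t) - t * ⟪gradient f x, v⟫ - L / 2 * (t ^ 2 * ‖v‖ ^ 2)
  have hχ' (t : ℝ) : HasDerivAt χ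
      (⟪gradient f (lineMap x y t) - gradient f x, v⟫ - L * t * ‖v‖ ^ 2) t := by
    have h := (((hf (lineMap x y t)).hasGradientAt.hasDerivAt_comp_lineMap).sub
      ((hasDerivAt_id t).mul_const ⟪gradient f x, v⟫)).sub
      (((hasDerivAt_pow 2 t).mul_const (‖v‖ ^ 2)).const_mul (L / 2))
    refine h.congr_deriv ?_
    simp only [inner_sub_left, v]
    norm_num
    ring
  have hχ_anti : AntitoneOn χ (Set.Icc 0 1) := by
    refine antitoneOn_of_deriv_nonpos (convex_Icc 0 1)
      (fun t _ => (hχ' t).continuousAt.continuousWithinAt)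
      (fun t _ => (hχ' t).differentiableAt.differentiableWithinAt) fun t ht => ?_
    rw [interior_Icc] at ht
    have hdist : ‖lineMap x y t - x‖ = t * ‖v‖ := by
      rw [← vsub_eq_sub, lineMap_vsub_left, norm_smul, Real.norm_of_nonneg ht.1.le, vsub_eq_sub]
    have hlip := mul_le_mul_of_nonneg_right (hL (lineMap x y t) x) (norm_nonneg v)
    rw [hdist] at hlip
    rw [(hχ' t).deriv]
    nlinarith [real_inner_le_norm (gradient f (lineMap x y t) - gradient f x) v]
  have h01 := hχ_anti (Set.left_mem_Icc.2 zero_le_one) (Set.right_mem_Icc.2 zero_le_one)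
    zero_le_one
  simp only [χ, lineMap_apply_zero, lineMap_apply_one] at h01
  linarith

theorem StrongConvexOn.add_inner_add_sq_le {f : E → ℝ} {m : ℝ} {f' x : E}
    (hf : StrongConvexOn Set.univ m f) (hf' : HasGradientAt f f' x) (y : E) :
    f x + ⟪f', y - x⟫ + m / 2 * ‖y - x‖ ^ 2 ≤ f y := by
  set φ : ℝ → ℝ := fun t => f (lineMap x y t) - m / 2 * ‖lineMap x y t‖ ^ 2
  have hφ : ConvexOn ℝ Set.univ φ := by
    have := (strongConvexOn_iff_convex.mp hf).comp_affineMap (lineMap x y)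
    rwa [Set.preimage_univ] at this
  have hφ' : HasDerivAt φ (⟪f', y - x⟫ - m / 2 * (2 * ⟪x, y - x⟫)) 0 := by
    have := (hasDerivAt_lineMap (a := x) (b := y) (x := (0 : ℝ))).norm_sq
    rw [lineMap_apply_zero] at this
    rw [← lineMap_apply_zero (k := ℝ) x y] at hf'
    exact hf'.hasDerivAt_comp_lineMap.sub (this.const_mul _)
  have := hφ.le_slope_of_hasDerivAt (Set.mem_univ 0) (Set.mem_univ 1) zero_lt_one hφ'
  simp only [slope_def_field, φ, lineMap_apply_zero, lineMap_apply_one, sub_zero, div_one] at this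
  have hsq : ‖y‖ ^ 2 = ‖x‖ ^ 2 + 2 * ⟪x, y - x⟫ + ‖y - x‖ ^ 2 := by
    simpa using norm_add_sq_real x (y - x)
  rw [hsq] at this
  linarith

theorem StrongConvexOn.two_mul_sub_le_sq_norm {f : E → ℝ} {m : ℝ} {f' x : E}
    (hf : StrongConvexOn Set.univ m f) (hm : 0 ≤ m) (hf' : HasGradientAt f f' x) (y : E) :
    2 * m * (f x - f y) ≤ ‖f'‖ ^ 2 := by
  have hlower := mul_le_mul_of_nonneg_left (hf.add_inner_add_sq_le hf' y)
    (by positivity : 0 ≤ 2 * m)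
  have hsq : 0 ≤ ‖f' + m • (y - x)‖ ^ 2 := sq_nonneg _
  rw [norm_add_sq_real, real_inner_smul_right, norm_smul, Real.norm_of_nonneg hm] at hsq
  nlinarith

theorem integral_norm_sq_eq_integral_norm_sub_sq_add [IsProbabilityMeasure P] {g : Ω → E}
    (hg : Integrable g P) (hvar : Integrable (fun ω => ‖g ω - ∫ ω, g ω ∂P‖ ^ 2) P) :
    ∫ ω, ‖g ω‖ ^ 2 ∂P = ∫ ω, ‖g ω - ∫ ω, g ω ∂P‖ ^ 2 ∂P + ‖∫ ω, g ω ∂P‖ ^ 2 := by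
  set m := ∫ ω, g ω ∂P
  have hinner : Integrable (fun ω => 2 * ⟪m, g ω⟫ - ‖m‖ ^ 2) P :=
    ((hg.const_inner m).const_mul 2).sub (integrable_const _)
  have hpt (ω : Ω) : ‖g ω‖ ^ 2 = ‖g ω - m‖ ^ 2 + (2 * ⟪m, g ω⟫ - ‖m‖ ^ 2) := by
    rw [norm_sub_sq_real, real_inner_comm]
    ring
  simp_rw [hpt]
  rw [integral_add hvar hinner, integral_sub ((hg.const_inner m).const_mul 2) (integrable_const _),
    integral_const_mul, integral_inner hg, integral_const, real_inner_self_eq_norm_sq]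
  simp
  ring

theorem integral_comp_sub_smul_le_of_lipschitz [IsProbabilityMeasure P] {f : E → ℝ} {L : ℝ}
    (hf : Differentiable ℝ f)
    (hL : ∀ x y, ‖gradient f x - gradient f y‖ ≤ L * ‖x - y‖) (w : E) (η : ℝ) {g : Ω → E}
    (hg : Integrable g P) (hg_sq : Integrable (fun ω => ‖g ω‖ ^ 2) P)
    (hfg : Integrable (fun ω => f (w - η • g ω)) P) :
    ∫ ω, f (w - η • g ω) ∂P
      ≤ f w - η * ⟪gradient f w, ∫ ω, g ω ∂P⟫ + L / 2 * η ^ 2 * ∫ ω, ‖g ω‖ ^ 2 ∂P := by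
  have hpt (ω : Ω) :
      f (w - η • g ω) ≤ f w - η * ⟪gradient f w, g ω⟫ + L / 2 * η ^ 2 * ‖g ω‖ ^ 2 := by
    have := le_add_inner_gradient_add_sq_of_lipschitz hf hL w (w - η • g ω)
    rwa [sub_sub_cancel_left, inner_neg_right, real_inner_smul_right, norm_neg, norm_smul,
      mul_pow, Real.norm_eq_abs, sq_abs, ← sub_eq_add_neg, ← mul_assoc] at this
  have hinner : Integrable (fun ω => η * ⟪gradient f w, g ω⟫) P := (hg.const_inner _).const_mul η
  have hlin : Integrable (fun ω => f w - η * ⟪gradient f w, g ω⟫) P :=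
    (integrable_const _).sub hinner
  have hsq : Integrable (fun ω => L / 2 * η ^ 2 * ‖g ω‖ ^ 2) P := hg_sq.const_mul _
  calc ∫ ω, f (w - η • g ω) ∂P
      ≤ ∫ ω, (f w - η * ⟪gradient f w, g ω⟫ + L / 2 * η ^ 2 * ‖g ω‖ ^ 2) ∂P :=
        integral_mono hfg (hlin.add hsq) hpt
    _ = _ := by
      rw [integral_add hlin hsq,
        integral_sub (integrable_const _) hinner, integral_const_mul, integral_const_mul,
        integral_inner hg, integral_const]
      simp

end

theorem sgd_one_step_descent
    {d : ℕ} {Ω : Type*} [MeasureSpace Ω] (P : Measure Ω) [IsProbabilityMeasure P]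
    (F : EuclideanSpace ℝ (Fin d) → ℝ)
    (β μ η ς : ℝ) (hβ : 0 < β) (hμ : 0 < μ)
    (hη : 0 < η) (hη' : η ≤ 1 / (2 * β))
    (hdiff : Differentiable ℝ F)
    (hsmooth : ∀ w₁ w₂, ‖gradient F w₁ - gradient F w₂‖ ≤ β * ‖w₁ - w₂‖)
    (hconv : StrongConvexOn Set.univ μ F)
    (wstar : EuclideanSpace ℝ (Fin d)) (hmin : ∀ w, F wstar ≤ F w)
    (w : EuclideanSpace ℝ (Fin d))
    (g : Ω → EuclideanSpace ℝ (Fin d))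
    (hg_int : Integrable g P)
    (hunbiased : ∫ ω, g ω ∂P = gradient F w)
    (hvar_int : Integrable (fun ω => ‖g ω - gradient F w‖ ^ 2) P)
    (hvar : ∫ ω, ‖g ω - gradient F w‖ ^ 2 ∂P ≤ ς ^ 2)
    (hF_int : Integrable (fun ω => F (w - η • g ω)) P) :
    (∫ ω, F (w - η • g ω) ∂P) - F wstar
      ≤ (1 + 4 * μ * β * η ^ 2 - 2 * μ * η) * (F w - F wstar)
        + 2 * β * η ^ 2 * ς ^ 2 := by
  have hβη : β * η ≤ 1 / 2 := by
    rw [le_div_iff₀ (by positivity)] at hη'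
    linarith
  have hg_sq := integrable_norm_sq_of_integrable_norm_sub_sq _ hg_int.aestronglyMeasurable hvar_int
  have hdescent := integral_comp_sub_smul_le_of_lipschitz hdiff hsmooth w η hg_int hg_sq hF_int
  rw [← hunbiased] at hvar_int
  rw [integral_norm_sq_eq_integral_norm_sub_sq_add hg_int hvar_int, hunbiased,
    real_inner_self_eq_norm_sq] at hdescent
  have hPL := hconv.two_mul_sub_le_sq_norm hμ.le (hdiff w).hasGradientAt wstar
  have hgap := sub_nonneg.2 (hmin w)
  linarith [mul_le_mul_of_nonneg_left hPL (by nlinarith : 0 ≤ η - β / 2 * η ^ 2),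
    mul_le_mul_of_nonneg_left hvar (by positivity : 0 ≤ β * η ^ 2),
    mul_nonneg (by positivity : 0 ≤ μ * β * η ^ 2) hgap,
    mul_nonneg (by positivity : 0 ≤ β * η ^ 2) (sq_nonneg ς)]
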